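/- Assume: (i) for each x ∈ I and 0 ≤ i ≤ L the partial derivative ∂_x^i F(x,y) exists for all y ∈ B and y ↦ ∂_x^i F(x,y) is integrable on B; (ii) the function 𝓘(x) = ∫_B F(x,y) dy is L times differentiable on I with 𝓘^{(i)}(x) = ∫_B ∂_x^i F(x,y) dy for all x ∈ I and 0 ≤ i ≤ L; (iii) for each x ∈ I, every G_j(x,·) is continuous on B, differentiable at every point of the interior of B, and y ↦ ∑_{j=1}^{d} ∂_{y_j} G_j(x,y) is integrable on B; (iv) for every x ∈ I and every y in the interior of B, ∑_{i=0}^{L} e_i(x)·∂_x^i F(x,y) = ∑_{j=1}^{d} ∂_{y_j} G_j(x,y). Then for every x ∈ I, ∑_{i=0}^{L} e_i(x)·𝓘^{(i)}(x) = ∑_{j=1}^{d} (1/(o_j − u_j))·∫_B [ G_j(x, y[j ↦ o_j]) − G_j(x, y[j ↦ u_j]) ] dy, where y[j ↦ c] denotes y with its j-th coordinate replaced by c; i.e., 𝓘 satisfies an inhomogeneous linear ODE whose right-hand side is a sum of 2d integrals of dimension d−1. -/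

import Mathlib

/-!
Integrate the integrand equation over the box `B`. It holds on the interior, hence almost
everywhere on `B` since the frontier of a convex set is null. On the left, differentiation under
the integral sign turns `∫_B ∑ eᵢ ∂ₓⁱF` into `∑ eᵢ 𝓘⁽ⁱ⁾`; on the right, the divergence theorem
gives the face integrals `∫ G_j(y[j ↦ o_j]) - G_j(y[j ↦ u_j])` over the `(d-1)`-dimensional faces,
and Fubini along the `j`-th coordinate writes each of them as `1 / (o_j - u_j)` times the
corresponding integral over `B`, whose integrand does not depend on `y_j`.
-/

open MeasureTheory Set

theorem setIntegral_congr_interior_of_convex {E F : Type*} [NormedAddCommGroup E]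
    [NormedSpace ℝ E] [FiniteDimensional ℝ E] [MeasurableSpace E] [BorelSpace E]
    [NormedAddCommGroup F] [NormedSpace ℝ F]
    (μ : Measure E) [μ.IsAddHaarMeasure] {s : Set E} (hs : Convex ℝ s) {f g : E → F}
    (hfg : EqOn f g (interior s)) : ∫ y in s, f y ∂μ = ∫ y in s, g y ∂μ := by
  have hae := interior_ae_eq_of_null_frontier (hs.addHaar_frontier μ)
  rw [← setIntegral_congr_set hae, ← setIntegral_congr_set hae]
  exact setIntegral_congr_fun measurableSet_interior hfg

theorem interior_Icc_pi {ι : Type*} [Finite ι] (u o : ι → ℝ) :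
    interior (Icc u o) = pi univ fun j => Ioo (u j) (o j) := by
  rw [← pi_univ_Icc, interior_pi_set finite_univ]
  simp only [interior_Icc]

theorem mapsTo_update_Icc {ι : Type*} [DecidableEq ι] {u o : ι → ℝ} {j : ι} {c : ℝ}
    (hc : c ∈ Icc (u j) (o j)) : MapsTo (Function.update · j c) (Icc u o) (Icc u o) :=
  fun _ hy =>
    ⟨le_update_iff.2 ⟨hc.1, fun k _ => hy.1 k⟩, update_le_iff.2 ⟨hc.2, fun k _ => hy.2 k⟩⟩

theorem setIntegral_Icc_comp_update {E : Type*} [NormedAddCommGroup E] [NormedSpace ℝ E]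
    {n : ℕ} {u o : Fin (n + 1) → ℝ} {j : Fin (n + 1)} (huo : u j ≤ o j)
    (g : (Fin (n + 1) → ℝ) → E) (c : ℝ) :
    ∫ y in Icc u o, g (Function.update y j c)
      = (o j - u j) • ∫ z in Icc (u ∘ j.succAbove) (o ∘ j.succAbove), g (j.insertNth c z) := by
  let T := MeasurableEquiv.piFinSuccAbove (fun _ : Fin (n + 1) => ℝ) j
  have hT : MeasurePreserving T.symm volume volume :=
    (volume_preserving_piFinSuccAbove (fun _ : Fin (n + 1) => ℝ) j).symm
  have hpre : T.symm ⁻¹' Icc u o = Icc (u j) (o j) ×ˢ Icc (u ∘ j.succAbove) (o ∘ j.succAbove) :=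
    ext fun p => Fin.insertNth_mem_Icc
  have hupdate (p : ℝ × (Fin n → ℝ)) : Function.update (T.symm p) j c = j.insertNth c p.2 :=
    Fin.update_insertNth (α := fun _ => ℝ) j p.1 c p.2
  rw [← hT.setIntegral_preimage_emb T.symm.measurableEmbedding, hpre, Measure.volume_eq_prod,
    ← Measure.prod_restrict]
  simp only [hupdate]
  rw [integral_fun_snd (fun z => g (j.insertNth c z)), measureReal_restrict_apply_univ,
    Real.volume_real_Icc_of_le huo]

theorem integrableOn_Icc_comp_update {E : Type*} [NormedAddCommGroup E] {ι : Type*} [Fintype ι]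
    [DecidableEq ι] {u o : ι → ℝ} {g : (ι → ℝ) → E} (hg : ContinuousOn g (Icc u o)) {j : ι}
    {c : ℝ} (hc : c ∈ Icc (u j) (o j)) :
    IntegrableOn (fun y => g (Function.update y j c)) (Icc u o) :=
  (hg.comp (continuous_id.update j continuous_const).continuousOn
    (mapsTo_update_Icc hc)).integrableOn_compact isCompact_Icc

theorem integral_divergence_eq_sum_integral_update {d : ℕ} {u o : Fin d → ℝ}
    (huo : ∀ j, u j < o j) (G : Fin d → (Fin d → ℝ) → ℝ)
    (hGc : ∀ j, ContinuousOn (G j) (Icc u o))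
    (hGd : ∀ j, ∀ y ∈ interior (Icc u o), DifferentiableAt ℝ (G j) y)
    (hdiv : IntegrableOn (fun y => ∑ j, fderiv ℝ (G j) y (Pi.single j 1)) (Icc u o)) :
    ∫ y in Icc u o, ∑ j, fderiv ℝ (G j) y (Pi.single j 1)
      = ∑ j, (1 / (o j - u j)) *
          ∫ y in Icc u o, (G j (Function.update y j (o j)) - G j (Function.update y j (u j))) := by
  cases d with
  | zero => simp
  | succ n =>
    rw [integral_divergence_of_hasFDerivAt_off_countable' u o (fun j => (huo j).le) G
      (fun j y => fderiv ℝ (G j) y) ∅ countable_empty hGc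
      (fun y hy j => (hGd j y (interior_Icc_pi u o ▸ hy.1)).hasFDerivAt)
      hdiv]
    refine Finset.sum_congr rfl fun j _ => ?_
    have huo_j : u j ≤ o j := (huo j).le
    rw [integral_sub (integrableOn_Icc_comp_update (hGc j) ⟨huo_j, le_rfl⟩)
        (integrableOn_Icc_comp_update (hGc j) ⟨le_rfl, huo_j⟩),
      setIntegral_Icc_comp_update huo_j, setIntegral_Icc_comp_update huo_j, ← smul_sub,
      smul_eq_mul, ← mul_assoc, one_div_mul_cancel (sub_ne_zero.2 (huo j).ne'), one_mul]

theorem parametric_box_integral_inhomogeneous_ODE_general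
    (d L : ℕ)
    (I : Set ℝ)
    (u o : Fin d → ℝ) (huo : ∀ j, u j < o j)
    (e : Fin (L + 1) → ℝ → ℝ)
    (F : ℝ → (Fin d → ℝ) → ℝ)
    (G : Fin d → ℝ → (Fin d → ℝ) → ℝ)
    (𝓘 : ℝ → ℝ)
    (hFint : ∀ x ∈ I, ∀ i ≤ L,
      IntegrableOn (fun y => iteratedDeriv i (fun τ : ℝ => F τ y) x) (Set.Icc u o) volume)
    (h𝓘deriv : ∀ x ∈ I, ∀ i ≤ L,
      iteratedDeriv i 𝓘 x = ∫ y in Set.Icc u o, iteratedDeriv i (fun τ : ℝ => F τ y) x)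
    (hGcont : ∀ j, ∀ x ∈ I, ContinuousOn (G j x) (Set.Icc u o))
    (hGdiff : ∀ j, ∀ x ∈ I, ∀ y ∈ interior (Set.Icc u o), DifferentiableAt ℝ (G j x) y)
    (hdiv : ∀ x ∈ I, IntegrableOn
      (fun y => ∑ j : Fin d, fderiv ℝ (G j x) y (Pi.single j (1 : ℝ))) (Set.Icc u o) volume)
    (heq : ∀ x ∈ I, ∀ y ∈ interior (Set.Icc u o),
      ∑ i : Fin (L + 1), e i x * iteratedDeriv (i : ℕ) (fun τ : ℝ => F τ y) x
        = ∑ j : Fin d, fderiv ℝ (G j x) y (Pi.single j (1 : ℝ))) :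
    ∀ x ∈ I, ∑ i : Fin (L + 1), e i x * iteratedDeriv (i : ℕ) 𝓘 x
      = ∑ j : Fin d, (1 / (o j - u j)) *
          ∫ y in Set.Icc u o,
            (G j x (Function.update y j (o j)) - G j x (Function.update y j (u j))) := by
  intro x hx
  calc ∑ i : Fin (L + 1), e i x * iteratedDeriv (i : ℕ) 𝓘 x
      = ∫ y in Icc u o, ∑ i : Fin (L + 1), e i x * iteratedDeriv i (fun τ => F τ y) x := by
        rw [integral_finsetSum _ fun (i : Fin (L + 1)) _ => (hFint x hx i i.is_le).const_mul (e i x)]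
        refine Finset.sum_congr rfl fun i _ => ?_
        rw [integral_const_mul, h𝓘deriv x hx i i.is_le]
    _ = ∫ y in Icc u o, ∑ j, fderiv ℝ (G j x) y (Pi.single j 1) :=
        setIntegral_congr_interior_of_convex volume (convex_Icc u o) (heq x hx)
    _ = _ := integral_divergence_eq_sum_integral_update huo (G · x) (hGcont · x hx)
        (hGdiff · x hx) (hdiv x hx)

/-- If the integrand satisfies the continuous Almkvist–Zeilberger integrand differential
equation, then the parametric integral satisfies an inhomogeneous linear ODE whose
right-hand side is a sum of `2d` boundary integrals of dimension `d - 1`. -/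
theorem parametric_box_integral_inhomogeneous_ODE
    (d L : ℕ) (hd : 1 ≤ d)
    (I : Set ℝ) (hIopen : IsOpen I) (hIconn : I.OrdConnected)
    (u o : Fin d → ℝ) (huo : ∀ j, u j < o j)
    (e : Fin (L + 1) → ℝ → ℝ)
    (F : ℝ → (Fin d → ℝ) → ℝ)
    (G : Fin d → ℝ → (Fin d → ℝ) → ℝ)
    (𝓘 : ℝ → ℝ) (h𝓘 : ∀ x, 𝓘 x = ∫ y in Set.Icc u o, F x y)
    (hFsmooth : ∀ x ∈ I, ∀ y ∈ Set.Icc u o, ContDiffAt ℝ L (fun τ : ℝ => F τ y) x)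
    (hFint : ∀ x ∈ I, ∀ i ≤ L,
      IntegrableOn (fun y => iteratedDeriv i (fun τ : ℝ => F τ y) x) (Set.Icc u o) volume)
    (h𝓘smooth : ∀ x ∈ I, ContDiffAt ℝ L 𝓘 x)
    (h𝓘deriv : ∀ x ∈ I, ∀ i ≤ L,
      iteratedDeriv i 𝓘 x = ∫ y in Set.Icc u o, iteratedDeriv i (fun τ : ℝ => F τ y) x)
    (hGcont : ∀ j, ∀ x ∈ I, ContinuousOn (G j x) (Set.Icc u o))
    (hGdiff : ∀ j, ∀ x ∈ I, ∀ y ∈ interior (Set.Icc u o), DifferentiableAt ℝ (G j x) y)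
    (hdiv : ∀ x ∈ I, IntegrableOn
      (fun y => ∑ j : Fin d, fderiv ℝ (G j x) y (Pi.single j (1 : ℝ))) (Set.Icc u o) volume)
    (heq : ∀ x ∈ I, ∀ y ∈ interior (Set.Icc u o),
      ∑ i : Fin (L + 1), e i x * iteratedDeriv (i : ℕ) (fun τ : ℝ => F τ y) x
        = ∑ j : Fin d, fderiv ℝ (G j x) y (Pi.single j (1 : ℝ))) :
    ∀ x ∈ I, ∑ i : Fin (L + 1), e i x * iteratedDeriv (i : ℕ) 𝓘 x
      = ∑ j : Fin d, (1 / (o j - u j)) *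
          ∫ y in Set.Icc u o,
            (G j x (Function.update y j (o j)) - G j x (Function.update y j (u j))) :=
  parametric_box_integral_inhomogeneous_ODE_general d L I u o huo e F G 𝓘 hFint h𝓘deriv hGcont
    hGdiff hdiv heq
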